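/- arXiv:2309.13284 — 7 statements merged into one kernel-verified Lean document; each statement's English description precedes it below -/
import Mathlib

section
/- Let R be a commutative ring with identity that is not a field (so R has at least one non-trivial ideal). Then G(R) admits a finite strong resolving set if and only if R has only finitely many ideals. -/
open SimpleGraph

/-- The type of non-trivial ideals of a commutative ring `R`
(ideals `I` with `I ≠ 0` and `I ≠ R`). -/
abbrev NontrivialIdeal (R : Type*) [CommRing R] : Type _ :=
  {I : Ideal R // I ≠ ⊥ ∧ I ≠ ⊤}

/-- The intersection graph of ideals of `R`: vertices are the non-trivial ideals,
and distinct vertices are adjacent iff their intersection is non-zero. -/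
def intersectionGraph (R : Type*) [CommRing R] : SimpleGraph (NontrivialIdeal R) where
  Adj I J := I ≠ J ∧ I.1 ⊓ J.1 ≠ ⊥
  symm := ⟨fun I J h => ⟨h.1.symm, by rw [inf_comm]; exact h.2⟩⟩
  loopless := ⟨fun I h => h.1 rfl⟩

/-- Two distinct vertices `u, v` are mutually maximally distant if
`d(v,w) ≤ d(u,v)` for every neighbour `w` of `u` and
`d(u,w) ≤ d(u,v)` for every neighbour `w` of `v`. -/
def MutuallyMaximallyDistant {V : Type*} (G : SimpleGraph V) (u v : V) : Prop :=
  u ≠ v ∧ (∀ w, G.Adj u w → G.edist v w ≤ G.edist u v) ∧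
    (∀ w, G.Adj v w → G.edist u w ≤ G.edist u v)

theorem MutuallyMaximallyDistant.symm {V : Type*} {G : SimpleGraph V} {u v : V}
    (h : MutuallyMaximallyDistant G u v) : MutuallyMaximallyDistant G v u :=
  ⟨h.1.symm,
    fun w hw => by rw [show G.edist v u = G.edist u v from G.edist_comm]; exact h.2.2 w hw,
    fun w hw => by rw [show G.edist v u = G.edist u v from G.edist_comm]; exact h.2.1 w hw⟩

/-- The strong resolving graph of `G`: `u` and `v` are adjacent iff they are
mutually maximally distant. -/
def strongResolvingGraph {V : Type*} (G : SimpleGraph V) : SimpleGraph V where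
  Adj := MutuallyMaximallyDistant G
  symm := ⟨fun _ _ h => h.symm⟩
  loopless := ⟨fun _ h => h.1 rfl⟩

/-- A vertex `w` strongly resolves `u` and `v` if `d(w,u) = d(w,v) + d(v,u)` or
`d(w,v) = d(w,u) + d(u,v)`. A set `W` is a strong resolving set if every two distinct
vertices are strongly resolved by some member of `W`. -/
def IsStrongResolvingSet {V : Type*} (G : SimpleGraph V) (W : Set V) : Prop :=
  ∀ u v : V, u ≠ v → ∃ w ∈ W,
    G.edist w u = G.edist w v + G.edist v u ∨ G.edist w v = G.edist w u + G.edist u v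

/-- The product ideal which is `Rᵢ` in the components where `I` is zero and `0` elsewhere. -/
def complIdeal {ι : Type*} (F : ι → Type*) [∀ i, CommRing (F i)] (I : Ideal (∀ i, F i)) :
    Ideal (∀ i, F i) where
  carrier := {x | ∀ i, I.map (Pi.evalRingHom F i) ≠ ⊥ → x i = 0}
  zero_mem' := fun i _ => rfl
  add_mem' := fun hx hy i hi => by
    simp only [Pi.add_apply, hx i hi, hy i hi, add_zero]
  smul_mem' := fun c x hx i hi => by
    simp only [Pi.smul_apply, smul_eq_mul, Pi.mul_apply, hx i hi, mul_zero]


/-!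
If `R` has finitely many ideals, the whole vertex set is a strong resolving set. Otherwise `G(R)`
has diameter at most `2`: two disjoint vertices `u, v` have the common neighbour `a + v` for
any nonzero `a ≤ u` with `a + v ≠ R`, and such an `a` exists unless `u, v` are minimal with
`u + v = R`, which forces `R` to have only four ideals. In a connected graph a mutually maximally
distant pair is strongly resolved only by its own members, so it suffices to find infinitely many
pairwise mutually maximally distant vertices. Disjoint vertices are such (by the diameter bound),
and so are twins, i.e. ideals disjoint from exactly the same ideals. If there are no infinite
families of either kind, every nonzero ideal contains a uniform ideal, there are finitely many
uniform ideals (two of them are either disjoint or twins), and the twin class of an ideal is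
determined by the uniform ideals below it; hence there are only finitely many ideals.
-/

section Graph

variable {V : Type*} {G : SimpleGraph V} {u v w : V}

theorem MutuallyMaximallyDistant.of_not_adj (hdiam : ∀ a b, G.edist a b ≤ 2) (hne : u ≠ v)
    (hadj : ¬G.Adj u v) : MutuallyMaximallyDistant G u v := by
  have huv : G.edist u v = 2 := by
    refine le_antisymm (hdiam u v) ?_
    rw [← one_add_one_eq_two]
    exact Order.add_one_le_of_lt <| lt_of_le_of_ne
      (Order.one_le_iff_pos.mpr (edist_pos_of_ne hne))
      (Ne.symm <| edist_eq_one_iff_adj.not.mpr hadj)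
  exact ⟨hne, fun w _ => huv ▸ hdiam v w, fun w _ => huv ▸ hdiam u w⟩

theorem MutuallyMaximallyDistant.of_twins (hne : u ≠ v) (huv : ∀ w ≠ v, G.Adj u w → G.Adj v w)
    (hvu : ∀ w ≠ u, G.Adj v w → G.Adj u w) : MutuallyMaximallyDistant G u v := by
  have hle : ∀ {x y z}, x ≠ y → (∀ w ≠ y, G.Adj x w → G.Adj y w) → G.Adj x z →
      G.edist y z ≤ G.edist x y := fun {x y z} hxy hxy' hxz => by
    rcases eq_or_ne z y with rfl | hzy
    · simp
    · exact (edist_eq_one_iff_adj.mpr (hxy' z hzy hxz)).le.trans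
        (Order.one_le_iff_pos.mpr (edist_pos_of_ne hxy))
  exact ⟨hne, fun w => hle hne huv, fun w hw => G.edist_comm (u := v) ▸ hle hne.symm hvu hw⟩

theorem MutuallyMaximallyDistant.edist_ne_add (h : MutuallyMaximallyDistant G u v) (hwv : w ≠ v)
    (hvw : G.Reachable v w) (huv : G.Reachable u v) :
    G.edist w u ≠ G.edist w v + G.edist v u := by
  intro heq
  obtain ⟨p, hp⟩ := hvw.exists_walk_length_eq_edist
  cases p with
  | nil => exact hwv rfl
  | @cons _ x _ hvx q =>
    obtain ⟨n, hn⟩ := ENat.ne_top_iff_exists.mp (edist_ne_top_iff_reachable.mpr huv)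
    have hwu : G.edist w u ≤ q.length + n := calc
      G.edist w u ≤ G.edist w x + G.edist x u := G.edist_triangle
      _ ≤ q.length + G.edist u v := by
        rw [G.edist_comm (u := w) (v := x), G.edist_comm (u := x) (v := u)]
        exact add_le_add q.edist_le (h.2.2 x hvx)
      _ = q.length + n := by rw [hn]
    rw [heq, edist_comm (u := w), ← hp, edist_comm (u := v), ← hn, Walk.length_cons] at hwu
    norm_cast at hwu
    omega

theorem IsStrongResolvingSet.infinite_of_pairwise (hG : G.Preconnected) {W S : Set V}
    (hW : IsStrongResolvingSet G W) (hS : S.Infinite)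
    (hmmd : S.Pairwise (MutuallyMaximallyDistant G)) : W.Infinite := by
  intro hWf
  obtain ⟨u, hu, v, hv, hne⟩ := (hS.sdiff hWf).nontrivial
  obtain ⟨w, hwW, hres | hres⟩ := hW u v hne
  · exact (hmmd hu.1 hv.1 hne).edist_ne_add (fun h => hv.2 (h ▸ hwW)) (hG v w) (hG u v) hres
  · exact (hmmd hv.1 hu.1 hne.symm).edist_ne_add (fun h => hu.2 (h ▸ hwW)) (hG u w) (hG v u)
      hres

theorem isStrongResolvingSet_univ (G : SimpleGraph V) : IsStrongResolvingSet G Set.univ :=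
  fun u _ _ => ⟨u, trivial, Or.inr (by rw [edist_self, zero_add])⟩

end Graph

section Uniform

open Function

variable {α : Type*} [Lattice α] [OrderBot α] {a b c : α}

def IsUniformElement (a : α) : Prop :=
  a ≠ ⊥ ∧ ∀ ⦃b c⦄, b ≤ a → c ≤ a → b ≠ ⊥ → c ≠ ⊥ → ¬Disjoint b c

theorem IsUniformElement.not_disjoint (ha : IsUniformElement a) (hab : ¬Disjoint a b)
    (hac : ¬Disjoint a c) : ¬Disjoint b c := fun hbc =>
  ha.2 inf_le_left inf_le_left (disjoint_iff.not.mp hab) (disjoint_iff.not.mp hac)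
    (hbc.mono inf_le_right inf_le_right)

theorem IsUniformElement.disjoint_iff (ha : IsUniformElement a) (hb : IsUniformElement b)
    (hab : ¬Disjoint a b) : Disjoint a c ↔ Disjoint b c :=
  ⟨fun hac => by_contra fun hbc => hb.not_disjoint (fun h => hab h.symm) hbc hac,
    fun hbc => by_contra fun hac => ha.not_disjoint hab hac hbc⟩

theorem exists_isUniformElement_le
    (hdisj : ∀ s : Set α, ⊥ ∉ s → s.PairwiseDisjoint id → s.Finite) {x : α} (hx : x ≠ ⊥) :
    ∃ c ≤ x, IsUniformElement c := by
  by_contra! h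
  have hsplit : ∀ y : {y // y ≤ x ∧ y ≠ ⊥}, ∃ b c : {y // y ≤ x ∧ y ≠ ⊥},
      b.1 ≤ y.1 ∧ c.1 ≤ y.1 ∧ Disjoint b.1 c.1 := by
    rintro ⟨y, hyx, hy⟩
    have := h y hyx
    simp only [IsUniformElement, not_and, not_forall, not_not] at this
    obtain ⟨b, c, hby, hcy, hb, hc, hbc⟩ := this hy
    exact ⟨⟨b, hby.trans hyx, hb⟩, ⟨c, hcy.trans hyx, hc⟩, hby, hcy, hbc⟩
  choose A B hA hB hAB using hsplit
  -- Along the decreasing chain `B^[n] x`, the piece `A` split off at step `m` is disjoint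
  -- from everything below `B^[m+1] x`, in particular from all later pieces.
  let t : ℕ → {y // y ≤ x ∧ y ≠ ⊥} := fun n => B^[n] ⟨x, le_rfl, hx⟩
  let f : ℕ → α := fun n => (A (t n)).1
  have ht : Antitone fun n => (t n).1 := antitone_nat_of_succ_le fun n => by
    simp only [t, Function.iterate_succ_apply']
    exact hB _
  have hf : Pairwise (Disjoint on f) := (pairwise_disjoint_on f).mpr fun m n hmn => by
    have hnm : (t n).1 ≤ (B (t m)).1 := by
      simpa only [t, Function.iterate_succ_apply'] using ht (Nat.succ_le_of_lt hmn)
    exact (hAB (t m)).mono_right ((hA (t n)).trans hnm)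
  have hf0 : ∀ n, f n ≠ ⊥ := fun n => (A (t n)).2.2
  have hinj : Injective f := fun m n hmn => by_contra fun hne => by
    have := hf hne
    rw [onFun, hmn, disjoint_self] at this
    exact hf0 n this
  exact Set.infinite_range_of_injective hinj <| hdisj _ (fun ⟨n, hn⟩ => hf0 n hn)
    hf.range_pairwise

theorem disjoint_iff_of_isUniformElement_le_iff
    (huniform : ∀ y : α, y ≠ ⊥ → ∃ c ≤ y, IsUniformElement c) {x y : α}
    (hxy : ∀ c, IsUniformElement c → (c ≤ x ↔ c ≤ y)) {z : α} :
    Disjoint x z ↔ Disjoint y z := by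
  have key : ∀ {x y : α}, (∀ c, IsUniformElement c → c ≤ x → c ≤ y) →
      Disjoint y z → Disjoint x z := fun {x y} hxy hyz => by
    by_contra hxz
    obtain ⟨c, hc, hcu⟩ := huniform (x ⊓ z) (disjoint_iff.not.mp hxz)
    exact hcu.1 (le_bot_iff.mp (hyz (hxy c hcu (hc.trans inf_le_left)) (hc.trans inf_le_right)))
  exact ⟨key fun c hc => (hxy c hc).2, key fun c hc => (hxy c hc).1⟩

theorem finite_of_finite_setOf_isUniformElement
    (huniform : ∀ y : α, y ≠ ⊥ → ∃ c ≤ y, IsUniformElement c)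
    (hU : {c : α | IsUniformElement c}.Finite)
    (htwins : ∀ x : α, {y : α | ∀ z, Disjoint x z ↔ Disjoint y z}.Finite) : Finite α := by
  let Φ : α → Set α := fun x => {c | IsUniformElement c ∧ c ≤ x}
  have hrange : (Set.range Φ).Finite :=
    hU.finite_subsets.subset fun _ ⟨x, hx⟩ c hc => (hx ▸ hc).1
  have hfibers : ∀ s ∈ Set.range Φ, (Φ ⁻¹' {s}).Finite := by
    rintro _ ⟨x, rfl⟩
    refine (htwins x).subset fun y hy z => disjoint_iff_of_isUniformElement_le_iff huniform ?_
    intro c hc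
    simpa [Φ, hc] using (Set.ext_iff.mp hy c).symm
  exact Set.finite_univ_iff.mp <| (hrange.preimage' hfibers).subset fun x _ => ⟨x, rfl⟩

end Uniform

section IntersectionGraph

variable {R : Type*} [CommRing R]

theorem Ideal.eq_inf_sup_inf_of_sup_eq_top {I J : Ideal R} (h : I ⊔ J = ⊤) (K : Ideal R) :
    K = K ⊓ I ⊔ K ⊓ J :=
  le_antisymm
    (calc K = K * (I ⊔ J) := by rw [h, Ideal.mul_top]
      _ = K * I ⊔ K * J := Ideal.mul_sup K I J
      _ ≤ K ⊓ I ⊔ K ⊓ J := sup_le_sup Ideal.mul_le_inf Ideal.mul_le_inf)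
    (sup_le inf_le_left inf_le_left)

theorem Ideal.finite_of_isAtom_of_sup_eq_top {I J : Ideal R} (hI : IsAtom I) (hJ : IsAtom J)
    (h : I ⊔ J = ⊤) : Finite (Ideal R) :=
  Set.finite_univ_iff.mp <|
    ((Set.toFinite {⊥, I}).image2 (· ⊔ ·) (Set.toFinite {⊥, J})).subset fun K _ =>
      Ideal.eq_inf_sup_inf_of_sup_eq_top h K ▸
        Set.mem_image2_of_mem (hI.le_iff.mp inf_le_right) (hJ.le_iff.mp inf_le_right)

theorem Ideal.finite_of_finite_preimage_val {s : Set (Ideal R)}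
    (h : (Subtype.val ⁻¹' s : Set (NontrivialIdeal R)).Finite) : s.Finite :=
  (((h.image Subtype.val).insert ⊤).insert ⊥).subset fun I hI => by
    by_cases h0 : I = ⊥
    · exact .inl h0
    by_cases h1 : I = ⊤
    · exact .inr (.inl h1)
    exact .inr (.inr ⟨⟨I, h0, h1⟩, hI, rfl⟩)

theorem intersectionGraph_adj {u v : NontrivialIdeal R} :
    (intersectionGraph R).Adj u v ↔ u ≠ v ∧ ¬Disjoint u.1 v.1 :=
  and_congr_right' disjoint_iff.not.symm

theorem intersectionGraph_commonNeighbors_nonempty_of_le {u v : NontrivialIdeal R}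
    (huv : Disjoint u.1 v.1) {a : Ideal R} (hau : a ≤ u.1) (ha : a ≠ ⊥) (htop : a ⊔ v.1 ≠ ⊤) :
    ((intersectionGraph R).commonNeighbors u v).Nonempty := by
  let w : NontrivialIdeal R := ⟨a ⊔ v.1, ne_bot_of_le_ne_bot v.2.1 le_sup_right, htop⟩
  refine ⟨w, (mem_commonNeighbors _).mpr ⟨intersectionGraph_adj.mpr ⟨?_, ?_⟩,
    intersectionGraph_adj.mpr ⟨?_, ?_⟩⟩⟩
  · intro h
    exact v.2.1 (huv.eq_bot_of_ge (congrArg Subtype.val h ▸ le_sup_right))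
  · exact fun h => ha (le_bot_iff.mp (h hau le_sup_left))
  · intro h
    exact ha (le_bot_iff.mp (huv hau (congrArg Subtype.val h ▸ le_sup_left)))
  · exact fun h => v.2.1 (le_bot_iff.mp (h le_rfl le_sup_right))

theorem intersectionGraph_commonNeighbors_nonempty_of_not_isAtom {u v : NontrivialIdeal R}
    (huv : Disjoint u.1 v.1) (hu : ¬IsAtom u.1) :
    ((intersectionGraph R).commonNeighbors u v).Nonempty := by
  obtain ⟨a, hau, ha⟩ : ∃ a < u.1, a ≠ ⊥ := by
    simpa [IsAtom, u.2.1] using hu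
  refine intersectionGraph_commonNeighbors_nonempty_of_le huv hau.le ha fun htop => hau.ne ?_
  calc a = a ⊔ v.1 ⊓ u.1 := by rw [huv.symm.eq_bot, sup_bot_eq]
    _ = (a ⊔ v.1) ⊓ u.1 := (sup_inf_assoc_of_le _ hau.le).symm
    _ = u.1 := by rw [htop, top_inf_eq]

theorem intersectionGraph_commonNeighbors_nonempty [Infinite (Ideal R)]
    {u v : NontrivialIdeal R} (huv : Disjoint u.1 v.1) :
    ((intersectionGraph R).commonNeighbors u v).Nonempty := by
  by_cases hu : IsAtom u.1
  · by_cases hv : IsAtom v.1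
    · by_cases hsup : u.1 ⊔ v.1 = ⊤
      · exact absurd (Ideal.finite_of_isAtom_of_sup_eq_top hu hv hsup)
          (not_finite_iff_infinite.mpr inferInstance)
      · exact intersectionGraph_commonNeighbors_nonempty_of_le huv le_rfl u.2.1 hsup
    · rw [commonNeighbors_symm]
      exact intersectionGraph_commonNeighbors_nonempty_of_not_isAtom huv.symm hv
  · exact intersectionGraph_commonNeighbors_nonempty_of_not_isAtom huv hu

theorem intersectionGraph_edist_le_two [Infinite (Ideal R)] (u v : NontrivialIdeal R) :
    (intersectionGraph R).edist u v ≤ 2 := by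
  rcases eq_or_ne u v with rfl | hne
  · simp
  by_cases hadj : (intersectionGraph R).Adj u v
  · exact (edist_eq_one_iff_adj.mpr hadj).trans_le one_le_two
  have huv : Disjoint u.1 v.1 := by simpa [intersectionGraph_adj, hne] using hadj
  exact (edist_eq_two_iff.mpr ⟨hne, hadj, intersectionGraph_commonNeighbors_nonempty huv⟩).le

theorem intersectionGraph_preconnected [Infinite (Ideal R)] : (intersectionGraph R).Preconnected :=
  fun u v => reachable_of_edist_ne_top <| ((intersectionGraph_edist_le_two u v).trans_lt
    (by decide)).ne

theorem intersectionGraph_mutuallyMaximallyDistant_of_disjoint [Infinite (Ideal R)]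
    {u v : NontrivialIdeal R} (hne : u ≠ v) (huv : Disjoint u.1 v.1) :
    MutuallyMaximallyDistant (intersectionGraph R) u v :=
  .of_not_adj intersectionGraph_edist_le_two hne fun h => (intersectionGraph_adj.mp h).2 huv

theorem intersectionGraph_mutuallyMaximallyDistant_of_forall_disjoint_iff
    {u v : NontrivialIdeal R} (hne : u ≠ v) (huv : ∀ J, Disjoint u.1 J ↔ Disjoint v.1 J) :
    MutuallyMaximallyDistant (intersectionGraph R) u v :=
  .of_twins hne
    (fun w hw h => intersectionGraph_adj.mpr
      ⟨hw.symm, (huv w.1).not.mp (intersectionGraph_adj.mp h).2⟩)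
    (fun w hw h => intersectionGraph_adj.mpr
      ⟨hw.symm, (huv w.1).not.mpr (intersectionGraph_adj.mp h).2⟩)

theorem intersectionGraph_pairwise_of_pairwiseDisjoint [Infinite (Ideal R)] {s : Set (Ideal R)}
    (hs : s.PairwiseDisjoint id) : (Subtype.val ⁻¹' s : Set (NontrivialIdeal R)).Pairwise
      (MutuallyMaximallyDistant (intersectionGraph R)) := fun _ hu _ hv hne =>
  intersectionGraph_mutuallyMaximallyDistant_of_disjoint hne
    (hs hu hv (Subtype.coe_injective.ne hne))

theorem intersectionGraph_pairwise_setOf_isUniformElement [Infinite (Ideal R)] :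
    (Subtype.val ⁻¹' {c : Ideal R | IsUniformElement c} : Set (NontrivialIdeal R)).Pairwise
      (MutuallyMaximallyDistant (intersectionGraph R)) := fun u hu v hv hne => by
  by_cases h : Disjoint u.1 v.1
  · exact intersectionGraph_mutuallyMaximallyDistant_of_disjoint hne h
  · exact intersectionGraph_mutuallyMaximallyDistant_of_forall_disjoint_iff hne fun _ =>
      IsUniformElement.disjoint_iff hu hv h

theorem intersectionGraph_pairwise_setOf_forall_disjoint_iff (I : Ideal R) :
    (Subtype.val ⁻¹' {J : Ideal R | ∀ K, Disjoint I K ↔ Disjoint J K} :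
      Set (NontrivialIdeal R)).Pairwise (MutuallyMaximallyDistant (intersectionGraph R)) :=
  fun _ hu _ hv hne => intersectionGraph_mutuallyMaximallyDistant_of_forall_disjoint_iff hne
    fun K => (hu K).symm.trans (hv K)

theorem exists_infinite_pairwise_mutuallyMaximallyDistant [Infinite (Ideal R)] :
    ∃ S : Set (NontrivialIdeal R), S.Infinite ∧
      S.Pairwise (MutuallyMaximallyDistant (intersectionGraph R)) := by
  by_contra! h
  have hfin : ∀ s : Set (Ideal R), (Subtype.val ⁻¹' s : Set (NontrivialIdeal R)).Pairwise
      (MutuallyMaximallyDistant (intersectionGraph R)) → s.Finite := fun s hs =>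
    Ideal.finite_of_finite_preimage_val (Set.not_infinite.mp fun hinf => h _ hinf hs)
  have huniform : ∀ I : Ideal R, I ≠ ⊥ → ∃ c ≤ I, IsUniformElement c := fun _ hI =>
    exists_isUniformElement_le
      (fun s _ hs => hfin s (intersectionGraph_pairwise_of_pairwiseDisjoint hs)) hI
  exact not_finite_iff_infinite.mpr ‹_› <| finite_of_finite_setOf_isUniformElement huniform
    (hfin _ intersectionGraph_pairwise_setOf_isUniformElement)
    fun I => hfin _ (intersectionGraph_pairwise_setOf_forall_disjoint_iff I)

end IntersectionGraph

theorem statement0_general (R : Type*) [CommRing R] :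
    (∃ W : Set (NontrivialIdeal R), W.Finite ∧ IsStrongResolvingSet (intersectionGraph R) W) ↔
      Finite (Ideal R) := by
  refine ⟨fun ⟨W, hWf, hW⟩ => ?_,
    fun _ => ⟨Set.univ, Set.finite_univ, isStrongResolvingSet_univ _⟩⟩
  by_contra hR
  have : Infinite (Ideal R) := not_finite_iff_infinite.mp hR
  obtain ⟨S, hS, hmmd⟩ := exists_infinite_pairwise_mutuallyMaximallyDistant (R := R)
  exact hW.infinite_of_pairwise intersectionGraph_preconnected hS hmmd hWf

theorem statement0 (R : Type*) [CommRing R] [Nontrivial R] (hR : ¬ IsField R) :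
    (∃ W : Set (NontrivialIdeal R), W.Finite ∧ IsStrongResolvingSet (intersectionGraph R) W) ↔
      Finite (Ideal R) :=
  statement0_general R
end

section
/- Let n ≥ 2 be a positive integer and R = F_1 × ⋯ × F_n, where each F_i is a field. Then for every non-trivial ideal I of R, the ideals I and I^c are mutually maximally distant in G(R); in particular, every vertex of G(R) is mutually maximally distant from some vertex of G(R). -/
open SimpleGraph

/-!
In a finite product of fields every ideal is a product of copies of `0` and `Fᵢ`, so `Iᶜ` is a
lattice complement of `I`, and complements of ideals are unique. Complementary ideals meet
trivially, hence lie at distance at least `2`. Conversely, if `u` and `v` are complementary, every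
vertex `w ≠ u` lies within distance `2` of `v`: either `w` meets `v`, or `w ⊓ v = 0`, and then
`w ⊔ v ≠ R` (otherwise `w` would be a second complement of `v`), so `w ⊔ v` is a vertex
meeting both `v` and `w`. Hence every neighbour of `u` is at least as close to `v` as `u` is,
and vice versa.
-/

theorem IsCompl.left_unique_of_isSimpleOrder {α : Type*} [Lattice α] [BoundedOrder α]
    [IsSimpleOrder α] {a b c : α} (ha : IsCompl a c) (hb : IsCompl b c) : a = b := by
  rcases IsSimpleOrder.eq_bot_or_eq_top c with rfl | rfl
  · rw [eq_top_of_isCompl_bot ha, eq_top_of_isCompl_bot hb]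
  · rw [eq_bot_of_isCompl_top ha, eq_bot_of_isCompl_top hb]

namespace Ideal

theorem complIdeal_eq_pi {ι : Type*} {F : ι → Type*} [∀ i, CommRing (F i)]
    (I : Ideal (∀ i, F i)) :
    complIdeal F I = pi fun i => if I.map (Pi.evalRingHom F i) = ⊥ then ⊤ else ⊥ := by
  ext x
  refine forall_congr' fun i => ?_
  by_cases h : I.map (Pi.evalRingHom F i) = ⊥ <;> simp [h]

variable {ι : Type*} [Finite ι] {F : ι → Type*} [∀ i, Field (F i)]

theorem isCompl_left_unique_pi {I J K : Ideal (∀ i, F i)} (hI : IsCompl I K) (hJ : IsCompl J K) :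
    I = J := by
  rw [piOrderIso.isCompl_iff, Pi.isCompl_iff] at hI hJ
  exact piOrderIso.injective <| funext fun i => (hI i).left_unique_of_isSimpleOrder (hJ i)

theorem isCompl_complIdeal (I : Ideal (∀ i, F i)) : IsCompl I (complIdeal F I) := by
  rw [piOrderIso.isCompl_iff, Pi.isCompl_iff]
  intro i
  change IsCompl (I.map _) ((complIdeal F I).map (Pi.evalRingHom F i))
  rw [complIdeal_eq_pi, map_evalRingHom_pi]
  rcases eq_bot_or_top (I.map (Pi.evalRingHom F i)) with h | h <;>
    simp [h, isCompl_bot_top, isCompl_top_bot]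

end Ideal

namespace intersectionGraph

variable {R : Type*} [CommRing R]

theorem edist_le_one_of_inf_ne_bot {I J : NontrivialIdeal R} (h : I.1 ⊓ J.1 ≠ ⊥) :
    (intersectionGraph R).edist I J ≤ 1 :=
  edist_le_one_iff_adj_or_eq.mpr <| or_iff_not_imp_right.mpr fun hne => ⟨hne, h⟩

theorem two_le_edist_of_inf_eq_bot {I J : NontrivialIdeal R} (h : I.1 ⊓ J.1 = ⊥) :
    2 ≤ (intersectionGraph R).edist I J := by
  have hne : I ≠ J := by
    rintro rfl
    exact I.2.1 (inf_idem I.1 ▸ h)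
  have hfar : ¬ (intersectionGraph R).edist I J ≤ 1 := by
    rw [edist_le_one_iff_adj_or_eq]
    exact fun h' => h'.elim (fun hadj => hadj.2 h) hne
  exact Order.add_one_le_of_lt (not_le.mp hfar)

theorem edist_le_two_of_isCompl
    (huniq : ∀ a b c : Ideal R, IsCompl a c → IsCompl b c → a = b)
    {u v w : NontrivialIdeal R} (huv : IsCompl u.1 v.1) (hwu : w ≠ u) :
    (intersectionGraph R).edist v w ≤ 2 := by
  by_cases hvw : v.1 ⊓ w.1 = ⊥
  · have hsup : w.1 ⊔ v.1 ≠ ⊤ := fun htop =>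
      hwu <| Subtype.ext <| huniq _ _ _ ⟨disjoint_iff.mpr (inf_comm v.1 w.1 ▸ hvw),
        codisjoint_iff.mpr htop⟩ huv
    let K : NontrivialIdeal R :=
      ⟨w.1 ⊔ v.1, bot_lt_iff_ne_bot.mp (v.2.1.bot_lt.trans_le le_sup_right), hsup⟩
    calc (intersectionGraph R).edist v w
        ≤ (intersectionGraph R).edist v K + (intersectionGraph R).edist K w :=
          SimpleGraph.edist_triangle
      _ ≤ 1 + 1 := add_le_add
          (edist_le_one_of_inf_ne_bot (by simpa [K] using v.2.1))
          (edist_le_one_of_inf_ne_bot (by simpa [K] using w.2.1))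
      _ = 2 := one_add_one_eq_two
  · exact (edist_le_one_of_inf_ne_bot hvw).trans one_le_two

theorem mutuallyMaximallyDistant_of_isCompl
    (huniq : ∀ a b c : Ideal R, IsCompl a c → IsCompl b c → a = b)
    {u v : NontrivialIdeal R} (huv : IsCompl u.1 v.1) :
    MutuallyMaximallyDistant (intersectionGraph R) u v := by
  have hfar := two_le_edist_of_inf_eq_bot huv.inf_eq_bot
  refine ⟨fun h => ?_, fun w hw => ?_, fun w hw => ?_⟩
  · simp [h] at hfar
  · exact (edist_le_two_of_isCompl huniq huv hw.ne.symm).trans hfar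
  · exact (edist_le_two_of_isCompl huniq huv.symm hw.ne.symm).trans hfar

end intersectionGraph

theorem mutuallyMaximallyDistant_complIdeal {ι : Type*} [Finite ι] {F : ι → Type*}
    [∀ i, Field (F i)] (I : NontrivialIdeal (∀ i, F i)) :
    ∃ hc : complIdeal F I.1 ≠ ⊥ ∧ complIdeal F I.1 ≠ ⊤,
      MutuallyMaximallyDistant (intersectionGraph (∀ i, F i)) I ⟨complIdeal F I.1, hc⟩ := by
  have hI := Ideal.isCompl_complIdeal I.1
  refine ⟨⟨fun h => I.2.2 (eq_top_of_isCompl_bot (by rwa [h] at hI)),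
    fun h => I.2.1 (eq_bot_of_isCompl_top (by rwa [h] at hI))⟩, ?_⟩
  exact intersectionGraph.mutuallyMaximallyDistant_of_isCompl
    (fun _ _ _ => Ideal.isCompl_left_unique_pi) hI

theorem statement1_general (n : ℕ) (F : Fin n → Type*) [∀ i, Field (F i)] :
    (∀ I : NontrivialIdeal (∀ i, F i),
        ∃ hc : complIdeal F I.1 ≠ ⊥ ∧ complIdeal F I.1 ≠ ⊤,
          MutuallyMaximallyDistant (intersectionGraph (∀ i, F i)) I ⟨complIdeal F I.1, hc⟩) ∧
      (∀ I : NontrivialIdeal (∀ i, F i),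
        ∃ J : NontrivialIdeal (∀ i, F i),
          MutuallyMaximallyDistant (intersectionGraph (∀ i, F i)) I J) :=
  ⟨mutuallyMaximallyDistant_complIdeal,
    fun I => ⟨_, (mutuallyMaximallyDistant_complIdeal I).choose_spec⟩⟩

theorem statement1 (n : ℕ) (hn : 2 ≤ n) (F : Fin n → Type*) [∀ i, Field (F i)] :
    (∀ I : NontrivialIdeal (∀ i, F i),
        ∃ hc : complIdeal F I.1 ≠ ⊥ ∧ complIdeal F I.1 ≠ ⊤,
          MutuallyMaximallyDistant (intersectionGraph (∀ i, F i)) I ⟨complIdeal F I.1, hc⟩) ∧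
      (∀ I : NontrivialIdeal (∀ i, F i),
        ∃ J : NontrivialIdeal (∀ i, F i),
          MutuallyMaximallyDistant (intersectionGraph (∀ i, F i)) I J) :=
  statement1_general n F
end

section
/- Let n ≥ 2 be a positive integer and R = F_1 × ⋯ × F_n, where each F_i is a field. Then two distinct non-trivial ideals I and J of R are mutually maximally distant in G(R) if and only if I ∩ J = 0, i.e., if and only if I and J are not adjacent in G(R). (Equivalently, the strong resolving graph G(R)_SR is the complement of G(R).) -/
open SimpleGraph

/-!
In a commutative ring whose ideal lattice is complemented (such as a finite product of fields)
every ideal is idempotent, so `I ⊓ J = I * J` and the ideal lattice is distributive, hence Boolean.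
The intersection graph is then the meet graph of the nontrivial elements of a Boolean lattice.
There, if `a ⊓ b ≠ ⊥` and `a ≰ b`, the element `a ⊓ bᶜ` is a neighbour of `a` not adjacent to `b`,
so `a` and `b` are not mutually maximally distant. If `a ⊓ b = ⊥`, then `d(a, b) ≥ 2`, while every
neighbour `w` of `a` lies within distance `2` of `b`, through `(a ⊓ w) ⊔ b`.
-/

namespace SimpleGraph

variable {V : Type*} {G : SimpleGraph V} {u v w x : V}

lemma two_le_edist_of_ne_of_not_adj (huv : u ≠ v) (h : ¬ G.Adj u v) : 2 ≤ G.edist u v := by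
  by_contra! hlt
  exact (edist_le_one_iff_adj_or_eq.mp (Order.le_of_lt_add_one hlt)).elim h huv

lemma edist_le_two_of_adj_of_adj (hux : G.Adj u x) (hxv : G.Adj x v) : G.edist u v ≤ 2 :=
  calc G.edist u v ≤ G.edist u x + G.edist x v := G.edist_triangle
    _ = 2 := by rw [edist_eq_one_iff_adj.mpr hux, edist_eq_one_iff_adj.mpr hxv]; rfl

end SimpleGraph

lemma MutuallyMaximallyDistant.adj_or_eq_of_adj {V : Type*} {G : SimpleGraph V} {u v w : V}
    (h : MutuallyMaximallyDistant G u v) (huv : G.Adj u v) (huw : G.Adj u w) :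
    G.Adj v w ∨ v = w :=
  edist_le_one_iff_adj_or_eq.mp ((h.2.1 w huw).trans (edist_eq_one_iff_adj.mpr huv).le)

def meetGraph (α : Type*) [Lattice α] [BoundedOrder α] :
    SimpleGraph {a : α // a ≠ ⊥ ∧ a ≠ ⊤} where
  Adj a b := a ≠ b ∧ a.1 ⊓ b.1 ≠ ⊥
  symm := ⟨fun a b h => ⟨h.1.symm, by rw [inf_comm]; exact h.2⟩⟩
  loopless := ⟨fun a h => h.1 rfl⟩

theorem intersectionGraph_eq_meetGraph (R : Type*) [CommRing R] :
    intersectionGraph R = meetGraph (Ideal R) := rfl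

section DistribLattice

variable {α : Type*} [DistribLattice α] [BoundedOrder α] {a b w : {x : α // x ≠ ⊥ ∧ x ≠ ⊤}}

lemma edist_meetGraph_le_two (hab : a.1 ⊓ b.1 = ⊥) (haw : (meetGraph α).Adj a w) :
    (meetGraph α).edist b w ≤ 2 := by
  obtain ⟨haw_ne, haw_inf⟩ := haw
  by_cases hbw : b.1 ⊓ w.1 = ⊥
  · have hk_ne_top : a.1 ⊓ w.1 ⊔ b.1 ≠ ⊤ := by
      intro htop
      have ha : a.1 = a.1 ⊓ w.1 :=
        calc a.1 = a.1 ⊓ (a.1 ⊓ w.1 ⊔ b.1) := by rw [htop, inf_top_eq]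
          _ = a.1 ⊓ w.1 := by rw [inf_sup_left, hab, sup_bot_eq, ← inf_assoc, inf_idem]
      have hw : w.1 = a.1 ⊓ w.1 :=
        calc w.1 = w.1 ⊓ (a.1 ⊓ w.1 ⊔ b.1) := by rw [htop, inf_top_eq]
          _ = a.1 ⊓ w.1 := by
            rw [inf_sup_left, inf_comm w.1 b.1, hbw, sup_bot_eq, inf_comm, inf_assoc, inf_idem]
      exact haw_ne (Subtype.ext (ha.trans hw.symm))
    let k : {x : α // x ≠ ⊥ ∧ x ≠ ⊤} :=
      ⟨a.1 ⊓ w.1 ⊔ b.1, ne_bot_of_le_ne_bot b.2.1 le_sup_right, hk_ne_top⟩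
    have hbk : (meetGraph α).Adj b k := by
      refine ⟨fun hbk => haw_inf ?_, ?_⟩
      · have hle : a.1 ⊓ w.1 ≤ b.1 := by
          rw [hbk]
          exact le_sup_left
        exact le_bot_iff.mp ((le_inf inf_le_left hle).trans hab.le)
      · rw [inf_eq_left.mpr le_sup_right]
        exact b.2.1
    have hkw : (meetGraph α).Adj k w := by
      refine ⟨fun hkw => b.2.1 ?_, ne_bot_of_le_ne_bot haw_inf (le_inf le_sup_left inf_le_right)⟩
      have hle : b.1 ≤ w.1 := by
        rw [← hkw]
        exact le_sup_right
      rwa [inf_eq_left.mpr hle] at hbw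
    exact edist_le_two_of_adj_of_adj hbk hkw
  · have hbw_ne : b ≠ w := by
      rintro rfl
      exact haw_inf hab
    have hbw_adj : (meetGraph α).Adj b w := ⟨hbw_ne, hbw⟩
    exact (edist_eq_one_iff_adj.mpr hbw_adj).le.trans one_le_two

variable [ComplementedLattice α]

lemma not_mutuallyMaximallyDistant_meetGraph (hab : a.1 ⊓ b.1 ≠ ⊥) (hle : ¬ a.1 ≤ b.1) :
    ¬ MutuallyMaximallyDistant (meetGraph α) a b := by
  obtain ⟨c, hc⟩ := exists_isCompl b.1
  have hwb : a.1 ⊓ c ⊓ b.1 = ⊥ := by rw [inf_assoc, inf_comm c, hc.inf_eq_bot, inf_bot_eq]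
  let w : {x : α // x ≠ ⊥ ∧ x ≠ ⊤} :=
    ⟨a.1 ⊓ c, fun h => hle (hc.inf_right_eq_bot_iff.mp h),
      fun h => b.2.1 (by rwa [h, top_inf_eq] at hwb)⟩
  have haw : (meetGraph α).Adj a w := by
    refine ⟨fun haw => hab ?_, ?_⟩
    · rw [haw]
      exact hwb
    · rw [← inf_assoc, inf_idem]
      exact w.2.1
  have hne : a ≠ b := by
    rintro rfl
    exact hle le_rfl
  intro h
  have hadj : (meetGraph α).Adj a b := ⟨hne, hab⟩
  rcases h.adj_or_eq_of_adj hadj haw with hbw | hbw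
  · exact hbw.2 (by rw [inf_comm]; exact hwb)
  · have hbc : b.1 = a.1 ⊓ c := congrArg Subtype.val hbw
    rw [← hbc, inf_idem] at hwb
    exact b.2.1 hwb

theorem mutuallyMaximallyDistant_meetGraph_iff (hab : a ≠ b) :
    MutuallyMaximallyDistant (meetGraph α) a b ↔ a.1 ⊓ b.1 = ⊥ := by
  refine ⟨fun h => ?_, fun h => ?_⟩
  · by_contra hinf
    by_cases hle : a.1 ≤ b.1
    · have hba : ¬ b.1 ≤ a.1 := fun hba => hab (Subtype.ext (le_antisymm hle hba))
      exact not_mutuallyMaximallyDistant_meetGraph (by rwa [inf_comm]) hba h.symm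
    · exact not_mutuallyMaximallyDistant_meetGraph hinf hle h
  · have hdist : 2 ≤ (meetGraph α).edist a b :=
      two_le_edist_of_ne_of_not_adj hab fun hadj => hadj.2 h
    exact ⟨hab, fun w hw => (edist_meetGraph_le_two h hw).trans hdist,
      fun w hw => (edist_meetGraph_le_two (by rwa [inf_comm]) hw).trans hdist⟩

end DistribLattice

namespace Ideal

variable {R : Type*} [CommRing R] [ComplementedLattice (Ideal R)]

theorem inf_eq_mul_of_complementedLattice (I J : Ideal R) : I ⊓ J = I * J := by
  obtain ⟨K, hK⟩ := exists_isCompl (I ⊓ J)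
  refine le_antisymm ?_ mul_le_inf
  calc I ⊓ J = (I ⊓ J) * (I ⊓ J ⊔ K) := by rw [hK.sup_eq_top, mul_top]
    _ = (I ⊓ J) * (I ⊓ J) := by
      rw [mul_sup, le_bot_iff.mp (mul_le_inf.trans hK.inf_eq_bot.le), sup_bot_eq]
    _ ≤ I * J := mul_mono inf_le_left inf_le_right

abbrev distribLatticeOfComplemented : DistribLattice (Ideal R) :=
  .ofInfSupLe fun I J K => by simp only [inf_eq_mul_of_complementedLattice, mul_sup, le_refl]

end Ideal

theorem statement2_general (n : ℕ) (F : Fin n → Type*) [∀ i, Field (F i)]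
    (I J : NontrivialIdeal (∀ i, F i)) (hIJ : I ≠ J) :
    (MutuallyMaximallyDistant (intersectionGraph (∀ i, F i)) I J ↔ I.1 ⊓ J.1 = ⊥) ∧
      (MutuallyMaximallyDistant (intersectionGraph (∀ i, F i)) I J ↔
        ¬ (intersectionGraph (∀ i, F i)).Adj I J) := by
  have hmmd : MutuallyMaximallyDistant (intersectionGraph (∀ i, F i)) I J ↔ I.1 ⊓ J.1 = ⊥ := by
    let := Ideal.distribLatticeOfComplemented (R := ∀ i, F i)
    rw [intersectionGraph_eq_meetGraph]
    exact mutuallyMaximallyDistant_meetGraph_iff hIJ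
  refine ⟨hmmd, hmmd.trans ⟨fun h hadj => hadj.2 h, fun h => ?_⟩⟩
  by_contra hinf
  exact h ⟨hIJ, hinf⟩

theorem statement2 (n : ℕ) (hn : 2 ≤ n) (F : Fin n → Type*) [∀ i, Field (F i)]
    (I J : NontrivialIdeal (∀ i, F i)) (hIJ : I ≠ J) :
    (MutuallyMaximallyDistant (intersectionGraph (∀ i, F i)) I J ↔ I.1 ⊓ J.1 = ⊥) ∧
      (MutuallyMaximallyDistant (intersectionGraph (∀ i, F i)) I J ↔
        ¬ (intersectionGraph (∀ i, F i)).Adj I J) :=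
  statement2_general n F I J hIJ
end

section
/- Let m ≥ 2 be a positive integer and R = R_1 × ⋯ × R_m, where each R_i is a commutative Artinian local principal ideal ring that is not a field. If I = I_1 × ⋯ × I_m and J = J_1 × ⋯ × J_m are distinct non-trivial ideals of R with the same zero-pattern (for every i, I_i = 0 if and only if J_i = 0), then I and J are mutually maximally distant in G(R). -/
open SimpleGraph

/-! In a zero-dimensional local ring whose maximal ideal is principal, say `(π)`, every element
is a unit times a power of `π`, so divisibility is total and the ideals form a chain. In particular
two non-zero ideals of such a ring always meet. For a product of such rings this means that two
ideals meet exactly when they are both non-zero in a common component, so adjacency in the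
intersection graph only depends on the zero-pattern. Hence two distinct ideals `I`, `J` with the same
zero-pattern are adjacent and have the same neighbours, which makes them mutually maximally distant. -/

theorem Ideal.le_total_of_dvd_total {S : Type*} [CommSemiring S] (h : ∀ a b : S, a ∣ b ∨ b ∣ a)
    (A B : Ideal S) : A ≤ B ∨ B ≤ A := by
  refine or_iff_not_imp_left.mpr fun hAB b hb => ?_
  obtain ⟨a, ha, haB⟩ := Set.not_subset.mp hAB
  rcases h a b with hab | hba
  · exact A.mem_of_dvd hab ha
  · exact absurd (B.mem_of_dvd hba hb) haB

namespace IsLocalRing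

variable {S : Type*} [CommRing S] [IsLocalRing S]

theorem exists_unit_mul_pow_eq {π : S} (hπ : maximalIdeal S = Ideal.span {π})
    (hnil : IsNilpotent π) (a : S) : ∃ (u : Sˣ) (k : ℕ), u * π ^ k = a := by
  obtain ⟨N, hN⟩ := hnil
  rcases eq_or_ne a 0 with rfl | ha
  · exact ⟨1, N, by simp [hN]⟩
  have hfin : FiniteMultiplicity π a :=
    FiniteMultiplicity.def.mpr ⟨N, fun h => ha (zero_dvd_iff.mp (by simpa [pow_succ, hN] using h))⟩
  have hlt := hfin.not_pow_dvd_of_multiplicity_lt (Nat.lt_succ_self _)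
  obtain ⟨c, hc⟩ := pow_multiplicity_dvd π a
  generalize multiplicity π a = k at hc hlt
  have hc_unit : IsUnit c := by
    by_contra hc_unit
    obtain ⟨d, rfl⟩ : π ∣ c := by
      rw [← Ideal.mem_span_singleton, ← hπ]
      exact (mem_maximalIdeal c).mpr hc_unit
    exact hlt ⟨d, by rw [hc, pow_succ, mul_assoc]⟩
  exact ⟨hc_unit.unit, k, by rw [hc, IsUnit.unit_spec, mul_comm]⟩

theorem dvd_or_dvd {π : S} (hπ : maximalIdeal S = Ideal.span {π}) (hnil : IsNilpotent π)
    (a b : S) : a ∣ b ∨ b ∣ a := by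
  obtain ⟨u, k, rfl⟩ := exists_unit_mul_pow_eq hπ hnil a
  obtain ⟨v, l, rfl⟩ := exists_unit_mul_pow_eq hπ hnil b
  simp only [Units.mul_left_dvd, Units.dvd_mul_left]
  exact (le_total k l).imp (pow_dvd_pow π) (pow_dvd_pow π)

theorem inf_ne_bot [Ring.KrullDimLE 0 S] [(maximalIdeal S).IsPrincipal] {A B : Ideal S}
    (hA : A ≠ ⊥) (hB : B ≠ ⊥) : A ⊓ B ≠ ⊥ := by
  obtain ⟨π, hπ⟩ := Submodule.IsPrincipal.principal (maximalIdeal S)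
  have hnil : IsNilpotent π :=
    Ring.KrullDimLE.isNilpotent_iff_mem_maximalIdeal.mpr (hπ ▸ Ideal.mem_span_singleton_self π)
  rcases Ideal.le_total_of_dvd_total (dvd_or_dvd hπ hnil) A B with h | h
  · rwa [inf_eq_left.mpr h]
  · rwa [inf_eq_right.mpr h]

end IsLocalRing

namespace Ideal

variable {ι : Type*} {R : ι → Type*} [∀ i, CommRing (R i)]

theorem exists_map_eval_ne_bot_of_inf_ne_bot {I J : Ideal (∀ i, R i)} (h : I ⊓ J ≠ ⊥) :
    ∃ i, I.map (Pi.evalRingHom R i) ≠ ⊥ ∧ J.map (Pi.evalRingHom R i) ≠ ⊥ := by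
  obtain ⟨x, ⟨hxI, hxJ⟩, hx⟩ := Submodule.exists_mem_ne_zero_of_ne_bot h
  obtain ⟨i, hxi⟩ := Function.ne_iff.mp hx
  exact ⟨i, (Submodule.ne_bot_iff _).mpr ⟨x i, mem_map_of_mem _ hxI, hxi⟩,
    (Submodule.ne_bot_iff _).mpr ⟨x i, mem_map_of_mem _ hxJ, hxi⟩⟩

theorem single_mem_of_mem_map_eval [DecidableEq ι] {I : Ideal (∀ i, R i)} {i : ι} {z : R i}
    (hz : z ∈ I.map (Pi.evalRingHom R i)) : Pi.single i z ∈ I := by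
  obtain ⟨x, hx, rfl⟩ := (mem_map_iff_of_surjective _ (Function.surjective_eval i)).mp hz
  simpa [← Pi.single_mul_left] using I.mul_mem_left (Pi.single i 1) hx

theorem inf_ne_bot_of_map_eval {I J : Ideal (∀ i, R i)} {i : ι}
    (h : I.map (Pi.evalRingHom R i) ⊓ J.map (Pi.evalRingHom R i) ≠ ⊥) : I ⊓ J ≠ ⊥ := by
  classical
  obtain ⟨z, ⟨hzI, hzJ⟩, hz⟩ := Submodule.exists_mem_ne_zero_of_ne_bot h
  exact (Submodule.ne_bot_iff _).mpr ⟨Pi.single i z,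
    ⟨single_mem_of_mem_map_eval hzI, single_mem_of_mem_map_eval hzJ⟩, by simpa using hz⟩

end Ideal

theorem intersectionGraph_pi_adj_iff {ι : Type*} {R : ι → Type*} [∀ i, CommRing (R i)]
    (hmeet : ∀ i (A B : Ideal (R i)), A ≠ ⊥ → B ≠ ⊥ → A ⊓ B ≠ ⊥)
    {I J : NontrivialIdeal (∀ i, R i)} :
    (intersectionGraph (∀ i, R i)).Adj I J ↔
      I ≠ J ∧ ∃ i, I.1.map (Pi.evalRingHom R i) ≠ ⊥ ∧ J.1.map (Pi.evalRingHom R i) ≠ ⊥ :=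
  and_congr_right fun _ => ⟨Ideal.exists_map_eval_ne_bot_of_inf_ne_bot,
    fun ⟨i, hI, hJ⟩ => Ideal.inf_ne_bot_of_map_eval (hmeet i _ _ hI hJ)⟩

theorem MutuallyMaximallyDistant.of_adj {V : Type*} {G : SimpleGraph V} {u v : V}
    (huv : G.Adj u v) (hu : ∀ w, G.Adj u w → w ≠ v → G.Adj v w)
    (hv : ∀ w, G.Adj v w → w ≠ u → G.Adj u w) : MutuallyMaximallyDistant G u v := by
  have hedist : G.edist u v = 1 := edist_eq_one_iff_adj.mpr huv
  refine ⟨huv.ne, fun w hw => ?_, fun w hw => ?_⟩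
  · rcases eq_or_ne w v with rfl | hwv
    · simp
    · rw [hedist, edist_eq_one_iff_adj.mpr (hu w hw hwv)]
  · rcases eq_or_ne w u with rfl | hwu
    · simp
    · rw [hedist, edist_eq_one_iff_adj.mpr (hv w hw hwu)]

theorem statement8_general (m : ℕ) (R : Fin m → Type*) [∀ i, CommRing (R i)]
    [∀ i, IsArtinianRing (R i)] [∀ i, IsLocalRing (R i)] [∀ i, IsPrincipalIdealRing (R i)]
    (I J : NontrivialIdeal (∀ i, R i)) (hIJ : I ≠ J)
    (hzp : ∀ i, I.1.map (Pi.evalRingHom R i) = ⊥ ↔ J.1.map (Pi.evalRingHom R i) = ⊥) :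
    MutuallyMaximallyDistant (intersectionGraph (∀ i, R i)) I J := by
  have hadj := @intersectionGraph_pi_adj_iff _ R _ fun _ _ _ => IsLocalRing.inf_ne_bot
  refine .of_adj ?_ ?_ ?_
  · obtain ⟨i, hI, -⟩ := Ideal.exists_map_eval_ne_bot_of_inf_ne_bot
      (I := I.1) (J := I.1) (by rw [inf_idem]; exact I.2.1)
    exact hadj.mpr ⟨hIJ, i, hI, (hzp i).not.mp hI⟩
  · intro w hw hwJ
    obtain ⟨-, i, hI, hw⟩ := hadj.mp hw
    exact hadj.mpr ⟨fun h => hwJ h.symm, i, (hzp i).not.mp hI, hw⟩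
  · intro w hw hwI
    obtain ⟨-, i, hJ, hw⟩ := hadj.mp hw
    exact hadj.mpr ⟨fun h => hwI h.symm, i, (hzp i).not.mpr hJ, hw⟩

theorem statement8 (m : ℕ) (hm : 2 ≤ m) (R : Fin m → Type*) [∀ i, CommRing (R i)]
    [∀ i, IsArtinianRing (R i)] [∀ i, IsLocalRing (R i)] [∀ i, IsPrincipalIdealRing (R i)]
    (hnf : ∀ i, ¬ IsField (R i))
    (I J : NontrivialIdeal (∀ i, R i)) (hIJ : I ≠ J)
    (hzp : ∀ i, I.1.map (Pi.evalRingHom R i) = ⊥ ↔ J.1.map (Pi.evalRingHom R i) = ⊥) :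
    MutuallyMaximallyDistant (intersectionGraph (∀ i, R i)) I J :=
  statement8_general m R I J hIJ hzp
end

section
/- Let m ≥ 2 be a positive integer and R = R_1 × ⋯ × R_m, where each R_i is a commutative Artinian local principal ideal ring that is not a field. If I = I_1 × ⋯ × I_m and J = J_1 × ⋯ × J_m are non-trivial ideals of R with different zero-patterns (there exists i with exactly one of I_i, J_i equal to 0), then I and J are mutually maximally distant in G(R) if and only if I ∩ J = 0 (equivalently, if and only if I and J are not adjacent in G(R)). -/
open SimpleGraph

/-!
Each `Rᵢ` is local but not a field, so every nonzero ideal of `Rᵢ` meets its maximal ideal `𝔪ᵢ`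
nontrivially, and two ideals of `R` meet iff some pair of their components meet. Hence `∏ 𝔪ᵢ`
is adjacent to every other vertex, `G(R)` has diameter at most `2`, and any two distinct
non-adjacent vertices are mutually maximally distant. Conversely, if `Iᵢ = 0 ≠ Jᵢ` and
`I ∩ J ≠ 0`, the ideal which is `𝔪ᵢ` at `i` and `0` elsewhere meets `J` but not `I`, so it is a
neighbour of `J` at distance `2 > d(I, J)` from `I`.
-/

open IsLocalRing

theorem SimpleGraph.ediam_le_two_of_forall_adj {V : Type*} {G : SimpleGraph V} {u : V}
    (hu : ∀ v, u ≠ v → G.Adj u v) : G.ediam ≤ 2 :=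
  calc G.ediam ≤ 2 * G.eccent u := G.ediam_le_two_mul_eccent u
    _ ≤ 2 * 1 := by gcongr; exact (G.eccent_le_one_iff u).2 hu
    _ = 2 := mul_one 2

section MutuallyMaximallyDistant

variable {V : Type*} {G : SimpleGraph V} {u v w : V}

theorem mutuallyMaximallyDistant_of_ediam_le_two (hG : G.ediam ≤ 2) (huv : u ≠ v)
    (hadj : ¬ G.Adj u v) : MutuallyMaximallyDistant G u v := by
  have h2 : 2 ≤ G.edist u v := by
    have h1 : 1 < G.edist u v := by
      rw [← not_le, edist_le_one_iff_adj_or_eq]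
      exact not_or.2 ⟨hadj, huv⟩
    rw [← one_add_one_eq_two]
    exact Order.add_one_le_of_lt h1
  exact ⟨huv, fun w _ => edist_le_ediam.trans (hG.trans h2),
    fun w _ => edist_le_ediam.trans (hG.trans h2)⟩

theorem MutuallyMaximallyDistant.edist_le_one (h : MutuallyMaximallyDistant G u v)
    (huv : G.edist u v ≤ 1) (hvw : G.edist v w ≤ 1) : G.edist u w ≤ 1 := by
  rcases edist_le_one_iff_adj_or_eq.1 hvw with hvw | rfl
  · exact (h.2.2 w hvw).trans huv
  · exact huv

end MutuallyMaximallyDistant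

theorem IsLocalRing.inf_maximalIdeal_ne_bot {A : Type*} [CommRing A] [IsLocalRing A]
    (hA : ¬ IsField A) {K : Ideal A} (hK : K ≠ ⊥) : K ⊓ maximalIdeal A ≠ ⊥ := by
  by_cases htop : K = ⊤
  · rwa [htop, top_inf_eq, ne_eq, ← isField_iff_maximalIdeal_eq]
  · rwa [inf_eq_left.2 (le_maximalIdeal htop)]

namespace Ideal

variable {ι : Type*} {R : ι → Type*} [∀ i, CommRing (R i)]

theorem single_mem_of_mem_map_evalRingHom [DecidableEq ι] {L : Ideal (∀ i, R i)} {i : ι}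
    {r : R i} (hr : r ∈ L.map (Pi.evalRingHom R i)) : Pi.single i r ∈ L := by
  obtain ⟨x, hx, rfl⟩ := (mem_map_iff_of_surjective _ (Function.surjective_eval i)).1 hr
  rw [Pi.evalRingHom_apply, ← one_mul (x i), Pi.single_mul_left (f := x)]
  exact L.mul_mem_left _ hx

theorem inf_eq_bot_iff_forall_map_evalRingHom {I J : Ideal (∀ i, R i)} :
    I ⊓ J = ⊥ ↔ ∀ i, I.map (Pi.evalRingHom R i) ⊓ J.map (Pi.evalRingHom R i) = ⊥ := by
  classical
  simp only [eq_bot_iff, SetLike.le_def, mem_inf, mem_bot]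
  constructor
  · rintro h i r ⟨hI, hJ⟩
    simpa using congr_fun (h ⟨single_mem_of_mem_map_evalRingHom hI,
      single_mem_of_mem_map_evalRingHom hJ⟩) i
  · rintro h x ⟨hI, hJ⟩
    funext i
    exact h i ⟨mem_map_of_mem _ hI, mem_map_of_mem _ hJ⟩

theorem eq_bot_iff_forall_map_evalRingHom {I : Ideal (∀ i, R i)} :
    I = ⊥ ↔ ∀ i, I.map (Pi.evalRingHom R i) = ⊥ := by
  simpa only [inf_idem] using inf_eq_bot_iff_forall_map_evalRingHom (I := I) (J := I)

theorem pi_ne_bot {K : ∀ i, Ideal (R i)} (i : ι) (hK : K i ≠ ⊥) : pi K ≠ ⊥ := fun h =>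
  hK (by rw [← map_evalRingHom_pi (I := K) i, h, map_bot])

theorem pi_ne_top {K : ∀ i, Ideal (R i)} (i : ι) (hK : K i ≠ ⊤) : pi K ≠ ⊤ := fun h =>
  hK (by rw [← map_evalRingHom_pi (I := K) i, h, map_top])

end Ideal

theorem intersectionGraph_edist_le_one_iff {A : Type*} [CommRing A] {I J : NontrivialIdeal A} :
    (intersectionGraph A).edist I J ≤ 1 ↔ I.1 ⊓ J.1 ≠ ⊥ := by
  rw [edist_le_one_iff_adj_or_eq]
  constructor
  · rintro (h | rfl)
    · exact h.2
    · rw [inf_idem]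
      exact I.2.1
  · intro h
    by_cases hIJ : I = J
    · exact .inr hIJ
    · exact .inl ⟨hIJ, h⟩

section Pi

variable {ι : Type*} {R : ι → Type*} [∀ i, CommRing (R i)] [∀ i, IsLocalRing (R i)]

theorem intersectionGraph_pi_ediam_le_two [Nonempty ι] (hR : ∀ i, ¬ IsField (R i)) :
    (intersectionGraph (∀ i, R i)).ediam ≤ 2 := by
  obtain ⟨i⟩ := ‹Nonempty ι›
  let T : NontrivialIdeal (∀ i, R i) :=
    ⟨Ideal.pi fun i => maximalIdeal (R i),
      Ideal.pi_ne_bot i (isField_iff_maximalIdeal_eq.not.1 (hR i)),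
      Ideal.pi_ne_top i (maximalIdeal.isMaximal _).ne_top⟩
  refine SimpleGraph.ediam_le_two_of_forall_adj (u := T) fun L hTL => ⟨hTL, ?_⟩
  obtain ⟨j, hj⟩ := not_forall.1 (mt Ideal.eq_bot_iff_forall_map_evalRingHom.2 L.2.1)
  rw [Ne, Ideal.inf_eq_bot_iff_forall_map_evalRingHom, not_forall]
  refine ⟨j, ?_⟩
  rw [Ideal.map_evalRingHom_pi, inf_comm]
  exact inf_maximalIdeal_ne_bot (hR j) hj

theorem inf_eq_bot_of_mutuallyMaximallyDistant {i : ι} (hR : ¬ IsField (R i))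
    {I J : NontrivialIdeal (∀ i, R i)} (hI : I.1.map (Pi.evalRingHom R i) = ⊥)
    (hJ : J.1.map (Pi.evalRingHom R i) ≠ ⊥)
    (h : MutuallyMaximallyDistant (intersectionGraph (∀ i, R i)) I J) : I.1 ⊓ J.1 = ⊥ := by
  classical
  by_contra hIJ
  let W : NontrivialIdeal (∀ i, R i) :=
    ⟨Ideal.pi (Function.update (⊥ : ∀ j, Ideal (R j)) i (maximalIdeal (R i))),
      Ideal.pi_ne_bot i (by simpa using isField_iff_maximalIdeal_eq.not.1 hR),
      Ideal.pi_ne_top i (by simpa using (maximalIdeal.isMaximal _).ne_top)⟩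
  have hW : ∀ j, W.1.map (Pi.evalRingHom R j) =
      Function.update (⊥ : ∀ j, Ideal (R j)) i (maximalIdeal (R i)) j :=
    fun j => Ideal.map_evalRingHom_pi j
  have hJW : J.1 ⊓ W.1 ≠ ⊥ := by
    rw [Ne, Ideal.inf_eq_bot_iff_forall_map_evalRingHom, not_forall]
    exact ⟨i, by rw [hW, Function.update_self]; exact inf_maximalIdeal_ne_bot hR hJ⟩
  have hIW : I.1 ⊓ W.1 = ⊥ := by
    rw [Ideal.inf_eq_bot_iff_forall_map_evalRingHom]
    intro j
    rcases eq_or_ne j i with rfl | hji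
    · rw [hI, bot_inf_eq]
    · rw [hW, Function.update_of_ne hji, Pi.bot_apply, inf_bot_eq]
  exact intersectionGraph_edist_le_one_iff.1 (h.edist_le_one
    (intersectionGraph_edist_le_one_iff.2 hIJ) (intersectionGraph_edist_le_one_iff.2 hJW)) hIW

end Pi

theorem statement9_general (m : ℕ) (R : Fin m → Type*) [∀ i, CommRing (R i)]
    [∀ i, IsLocalRing (R i)]
    (hnf : ∀ i, ¬ IsField (R i))
    (I J : NontrivialIdeal (∀ i, R i))
    (hzp : ∃ i, ¬ (I.1.map (Pi.evalRingHom R i) = ⊥ ↔ J.1.map (Pi.evalRingHom R i) = ⊥)) :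
    MutuallyMaximallyDistant (intersectionGraph (∀ i, R i)) I J ↔ I.1 ⊓ J.1 = ⊥ := by
  obtain ⟨i, hi⟩ := hzp
  have : Nonempty (Fin m) := ⟨i⟩
  have hIJ : I ≠ J := by
    rintro rfl
    exact hi Iff.rfl
  refine ⟨fun h => ?_, fun h => mutuallyMaximallyDistant_of_ediam_le_two
    (intersectionGraph_pi_ediam_le_two hnf) hIJ fun hadj => hadj.2 h⟩
  by_cases hI : I.1.map (Pi.evalRingHom R i) = ⊥
  · exact inf_eq_bot_of_mutuallyMaximallyDistant (hnf i) hI (by tauto) h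
  · rw [inf_comm]
    exact inf_eq_bot_of_mutuallyMaximallyDistant (hnf i) (by tauto) hI h.symm

theorem statement9 (m : ℕ) (hm : 2 ≤ m) (R : Fin m → Type*) [∀ i, CommRing (R i)]
    [∀ i, IsArtinianRing (R i)] [∀ i, IsLocalRing (R i)] [∀ i, IsPrincipalIdealRing (R i)]
    (hnf : ∀ i, ¬ IsField (R i))
    (I J : NontrivialIdeal (∀ i, R i))
    (hzp : ∃ i, ¬ (I.1.map (Pi.evalRingHom R i) = ⊥ ↔ J.1.map (Pi.evalRingHom R i) = ⊥)) :
    MutuallyMaximallyDistant (intersectionGraph (∀ i, R i)) I J ↔ I.1 ⊓ J.1 = ⊥ :=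
  statement9_general m R hnf I J hzp
end

section
/- Let m ≥ 2 be a positive integer and R = R_1 × ⋯ × R_m, where each R_i is a commutative Artinian local principal ideal ring that is not a field with exactly n_i non-trivial ideals. Let A_0 be the set of non-trivial ideals I = I_1 × ⋯ × I_m of R with I_i ≠ 0 for every i. Then |A_0| = ∏_{i=1}^m (n_i + 1) − 1, any two distinct members of A_0 are mutually maximally distant in G(R), and no member of A_0 is mutually maximally distant from any non-trivial ideal outside A_0. -/
open SimpleGraph

/-!
The ideals of an Artinian local principal ideal ring form a chain: its maximal ideal is generated
by a nilpotent `π`, and stripping common factors `π` off two non-units shows that divisibility is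
total. Hence any two nonzero ideals of a factor meet, and an ideal of `∏ Rᵢ` that is nonzero in
every coordinate meets every nonzero ideal: the members of `A₀` are universal vertices of `G(R)`,
so any two of them are at distance `1` while every vertex is within distance `1` of both. An ideal
`J` vanishing in some coordinate misses the ideal that is `Rᵢ` exactly where `J` vanishes; a
universal `I` is adjacent to that ideal, which is farther than `d(I, J) = 1` from `J`. Finally,
ideals of a finite product are tuples of ideals of the factors, which gives the count.
-/

open IsLocalRing

section ChainRing

variable {S : Type*} [CommRing S] [IsLocalRing S]

theorem dvd_total_of_maximalIdeal_eq_span {π : S} (hπ : maximalIdeal S = Ideal.span {π})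
    (hnil : IsNilpotent π) (a b : S) : a ∣ b ∨ b ∣ a := by
  have hdvd : ∀ x : S, ¬ IsUnit x → π ∣ x := fun x hx => by
    rwa [← Ideal.mem_span_singleton, ← hπ, mem_maximalIdeal]
  have key : ∀ k, ∀ a b : S, ¬ π ^ k ∣ a → a ∣ b ∨ b ∣ a := by
    intro k
    induction k with
    | zero => simp
    | succ k ih =>
      intro a b ha
      by_cases hau : IsUnit a
      · exact Or.inl hau.dvd
      by_cases hbu : IsUnit b
      · exact Or.inr hbu.dvd
      obtain ⟨a', rfl⟩ := hdvd a hau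
      obtain ⟨b', rfl⟩ := hdvd b hbu
      have ha' : ¬ π ^ k ∣ a' := fun h => ha (by rw [pow_succ']; exact mul_dvd_mul_left π h)
      exact (ih a' b' ha').imp (mul_dvd_mul_left π) (mul_dvd_mul_left π)
  obtain ⟨n, hn⟩ := hnil
  by_cases ha : a = 0
  · exact Or.inr (ha ▸ dvd_zero b)
  · exact key n a b fun h => ha (by rwa [hn, zero_dvd_iff] at h)

instance [IsArtinianRing S] [IsPrincipalIdealRing S] : PreValuationRing S := by
  obtain ⟨π, hπ⟩ := (IsPrincipalIdealRing.principal (maximalIdeal S)).1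
  rw [Ideal.submodule_span_eq] at hπ
  have hnil : IsNilpotent π :=
    Ring.KrullDimLE.isNilpotent_iff_mem_maximalIdeal.mpr (hπ ▸ Ideal.mem_span_singleton_self π)
  exact PreValuationRing.iff_dvd_total.mpr ⟨dvd_total_of_maximalIdeal_eq_span hπ hnil⟩

end ChainRing

theorem Ideal.inf_ne_bot_of_preValuationRing {S : Type*} [CommRing S] [PreValuationRing S]
    {I J : Ideal S} (hI : I ≠ ⊥) (hJ : J ≠ ⊥) : I ⊓ J ≠ ⊥ := by
  rcases (PreValuationRing.iff_ideal_total.mp ‹_›).total I J with h | h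
  · rwa [inf_eq_left.mpr h]
  · rwa [inf_eq_right.mpr h]

section Pi

variable {ι : Type*} {R : ι → Type*} [∀ i, CommRing (R i)]

theorem Ideal.single_mem_of_mem_map_evalRingHom_s10 [DecidableEq ι] {I : Ideal (Π i, R i)} {i : ι}
    {a : R i} (ha : a ∈ I.map (Pi.evalRingHom R i)) : Pi.single i a ∈ I := by
  obtain ⟨x, hx, rfl⟩ :=
    (Ideal.mem_map_iff_of_surjective _ (Function.surjective_eval i)).mp ha
  simpa [← Pi.single_mul_left] using I.mul_mem_left (Pi.single i 1) hx

theorem Ideal.exists_map_evalRingHom_ne_bot {I : Ideal (Π i, R i)} (hI : I ≠ ⊥) :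
    ∃ i, I.map (Pi.evalRingHom R i) ≠ ⊥ := by
  obtain ⟨x, hx, hx0⟩ := Submodule.exists_mem_ne_zero_of_ne_bot hI
  obtain ⟨i, hi⟩ := Function.ne_iff.mp hx0
  exact ⟨i, fun h => hi (by simpa [h] using Ideal.mem_map_of_mem (Pi.evalRingHom R i) hx)⟩

theorem Ideal.inf_ne_bot_of_map_evalRingHom {I J : Ideal (Π i, R i)} (i : ι)
    (h : I.map (Pi.evalRingHom R i) ⊓ J.map (Pi.evalRingHom R i) ≠ ⊥) : I ⊓ J ≠ ⊥ := by
  classical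
  obtain ⟨a, ⟨haI, haJ⟩, ha0⟩ := Submodule.exists_mem_ne_zero_of_ne_bot h
  refine fun hbot => ha0 ?_
  have : Pi.single i a ∈ I ⊓ J :=
    ⟨single_mem_of_mem_map_evalRingHom_s10 haI, single_mem_of_mem_map_evalRingHom_s10 haJ⟩
  simpa [hbot] using this

end Pi

namespace SimpleGraph

variable {V : Type*} {G : SimpleGraph V} {u v : V}

theorem edist_le_one_of_forall_adj (hu : ∀ w, w ≠ u → G.Adj u w) (w : V) : G.edist u w ≤ 1 :=
  edist_le_one_iff_adj_or_eq.mpr ((eq_or_ne w u).symm.imp (hu w) Eq.symm)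

theorem mutuallyMaximallyDistant_of_forall_adj (huv : u ≠ v) (hu : ∀ w, w ≠ u → G.Adj u w)
    (hv : ∀ w, w ≠ v → G.Adj v w) : MutuallyMaximallyDistant G u v := by
  have hd : G.edist u v = 1 := edist_eq_one_iff_adj.mpr (hu v huv.symm)
  exact ⟨huv, fun w _ => hd ▸ edist_le_one_of_forall_adj hv w,
    fun w _ => hd ▸ edist_le_one_of_forall_adj hu w⟩

theorem not_mutuallyMaximallyDistant_of_forall_adj (hu : ∀ w, w ≠ u → G.Adj u w) {w : V}
    (hwv : w ≠ v) (hvw : ¬ G.Adj v w) : ¬ MutuallyMaximallyDistant G u v := by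
  rintro ⟨huv, hfar, -⟩
  have hwu : w ≠ u := by
    rintro rfl
    exact hvw (hu v huv.symm).symm
  have := hfar w (hu w hwu)
  rw [edist_eq_one_iff_adj.mpr (hu v huv.symm), edist_le_one_iff_adj_or_eq] at this
  exact this.elim hvw hwv.symm

end SimpleGraph

section IntersectionGraph

variable {ι : Type*} {R : ι → Type*} [∀ i, CommRing (R i)]

theorem intersectionGraph_adj_of_forall_map_ne_bot [∀ i, PreValuationRing (R i)]
    {I J : NontrivialIdeal (Π i, R i)} (hI : ∀ i, I.1.map (Pi.evalRingHom R i) ≠ ⊥)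
    (hJI : J ≠ I) : (intersectionGraph (Π i, R i)).Adj I J := by
  obtain ⟨i, hJi⟩ := Ideal.exists_map_evalRingHom_ne_bot J.2.1
  exact ⟨hJI.symm, Ideal.inf_ne_bot_of_map_evalRingHom i
    (Ideal.inf_ne_bot_of_preValuationRing (hI i) hJi)⟩

theorem inf_complIdeal_eq_bot (I : Ideal (Π i, R i)) : I ⊓ complIdeal R I = ⊥ := by
  refine eq_bot_iff.mpr fun x ⟨hxI, hxW⟩ => funext fun i => ?_
  by_cases hi : I.map (Pi.evalRingHom R i) = ⊥
  · exact (Ideal.map_eq_bot_iff_le_ker _).mp hi hxI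
  · exact hxW i hi

theorem complIdeal_ne_top {I : Ideal (Π i, R i)} (hI : I ≠ ⊥) : complIdeal R I ≠ ⊤ := by
  obtain ⟨i, hi⟩ := Ideal.exists_map_evalRingHom_ne_bot hI
  obtain ⟨a, -, ha⟩ := Submodule.exists_mem_ne_zero_of_ne_bot hi
  have : Nontrivial (R i) := nontrivial_of_ne a 0 ha
  exact (Ideal.ne_top_iff_one _).mpr fun h => one_ne_zero (h i hi)

theorem complIdeal_ne_bot {I : Ideal (Π i, R i)} {i₀ : ι} [Nontrivial (R i₀)]
    (hI : I.map (Pi.evalRingHom R i₀) = ⊥) : complIdeal R I ≠ ⊥ := by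
  classical
  have hmem : Pi.single i₀ 1 ∈ complIdeal R I := fun i hi =>
    Pi.single_eq_of_ne (by rintro rfl; exact hi hI) 1
  exact fun h => by simp [h] at hmem

theorem exists_not_adj_of_map_eq_bot {J : NontrivialIdeal (Π i, R i)} {i₀ : ι}
    [Nontrivial (R i₀)] (hJ : J.1.map (Pi.evalRingHom R i₀) = ⊥) :
    ∃ W, W ≠ J ∧ ¬ (intersectionGraph (Π i, R i)).Adj J W := by
  refine ⟨⟨complIdeal R J.1, complIdeal_ne_bot hJ, complIdeal_ne_top J.2.1⟩, fun h => ?_,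
    fun h => h.2 (inf_complIdeal_eq_bot J.1)⟩
  have hW : complIdeal R J.1 = J.1 := congrArg Subtype.val h
  have := inf_complIdeal_eq_bot J.1
  rw [hW, inf_idem] at this
  exact J.2.1 this

end IntersectionGraph

theorem encard_setOf_ne_bot_ideal (S : Type*) [CommRing S] [Nontrivial S] :
    {K : Ideal S | K ≠ ⊥}.encard = {K : Ideal S | K ≠ ⊥ ∧ K ≠ ⊤}.encard + 1 := by
  have : {K : Ideal S | K ≠ ⊥} = insert ⊤ {K | K ≠ ⊥ ∧ K ≠ ⊤} := by
    ext K
    by_cases h : K = ⊤ <;> simp [h]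
  rw [this, Set.encard_insert_of_notMem fun h => h.2 rfl]

theorem encard_setOf_forall_map_evalRingHom_ne_bot {ι : Type*} [Fintype ι] [Nonempty ι]
    {R : ι → Type*} [∀ i, CommRing (R i)] [∀ i, Nontrivial (R i)] :
    {I : NontrivialIdeal (Π i, R i) | ∀ i, I.1.map (Pi.evalRingHom R i) ≠ ⊥}.encard =
      (∏ i, {K : Ideal (R i) | K ≠ ⊥}.encard) - 1 := by
  have himage : (Ideal.piOrderIso ∘ Subtype.val) ''
      {I : NontrivialIdeal (Π i, R i) | ∀ i, I.1.map (Pi.evalRingHom R i) ≠ ⊥} =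
      Set.univ.pi (fun i => {K : Ideal (R i) | K ≠ ⊥}) \ {⊤} := by
    ext f
    simp only [Set.mem_image, Set.mem_ofPred_eq, Function.comp_apply, Set.mem_sdiff,
      Set.mem_univ_pi, Set.mem_singleton_iff]
    constructor
    · rintro ⟨I, hI, rfl⟩
      exact ⟨hI, fun h => I.2.2 ((map_eq_top_iff _).mp h)⟩
    · rintro ⟨hf, hftop⟩
      have hfbot : f ≠ ⊥ := fun h => hf (Classical.arbitrary ι) (congrFun h _)
      refine ⟨⟨Ideal.piOrderIso.symm f, ?_, ?_⟩, ?_, Ideal.piOrderIso.apply_symm_apply f⟩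
      · exact fun h => hfbot ((map_eq_bot_iff _).mp h)
      · exact fun h => hftop ((map_eq_top_iff _).mp h)
      · exact fun i => (Ideal.map_evalRingHom_pi i).trans_ne (hf i)
  rw [← Set.encard_pi_eq_prod_encard, ← Set.encard_sdiff_singleton_of_mem, ← himage,
    (Ideal.piOrderIso.injective.comp Subtype.val_injective).encard_image]
  exact fun i _ => top_ne_bot

theorem statement10_general (m : ℕ) (hm : 2 ≤ m) (R : Fin m → Type*) [∀ i, CommRing (R i)]
    [∀ i, IsArtinianRing (R i)] [∀ i, IsLocalRing (R i)] [∀ i, IsPrincipalIdealRing (R i)]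
    (nn : Fin m → ℕ)
    (hfin : ∀ i, {K : Ideal (R i) | K ≠ ⊥ ∧ K ≠ ⊤}.Finite)
    (hcard : ∀ i, {K : Ideal (R i) | K ≠ ⊥ ∧ K ≠ ⊤}.ncard = nn i)
    (A0 : Set (NontrivialIdeal (∀ i, R i)))
    (hA0 : A0 = {I | ∀ i, I.1.map (Pi.evalRingHom R i) ≠ ⊥}) :
    A0.Finite ∧ A0.ncard = (∏ i, (nn i + 1)) - 1 ∧
      (∀ I ∈ A0, ∀ J ∈ A0, I ≠ J →
        MutuallyMaximallyDistant (intersectionGraph (∀ i, R i)) I J) ∧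
      (∀ I ∈ A0, ∀ J ∉ A0,
        ¬ MutuallyMaximallyDistant (intersectionGraph (∀ i, R i)) I J) := by
  have : Nonempty (Fin m) := ⟨⟨0, by omega⟩⟩
  have hencard : A0.encard = ((∏ i, (nn i + 1) - 1 : ℕ) : ℕ∞) := by
    simp_rw [hA0, encard_setOf_forall_map_evalRingHom_ne_bot, encard_setOf_ne_bot_ideal,
      ← (hfin _).cast_ncard_eq, hcard, ENat.natCast_sub]
    push_cast
    rfl
  have hfinite : A0.Finite := Set.finite_of_encard_eq_coe hencard
  have huniversal : ∀ I ∈ A0, ∀ J, J ≠ I → (intersectionGraph (∀ i, R i)).Adj I J := by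
    rw [hA0]
    exact fun I hI J => intersectionGraph_adj_of_forall_map_ne_bot hI
  refine ⟨hfinite, by exact_mod_cast hfinite.cast_ncard_eq.trans hencard, ?_, ?_⟩
  · exact fun I hI J hJ hIJ =>
      mutuallyMaximallyDistant_of_forall_adj hIJ (huniversal I hI) (huniversal J hJ)
  · intro I hI J hJ
    obtain ⟨i₀, hi₀⟩ : ∃ i, J.1.map (Pi.evalRingHom R i) = ⊥ := by simpa [hA0] using hJ
    obtain ⟨W, hWJ, hJW⟩ := exists_not_adj_of_map_eq_bot hi₀
    exact not_mutuallyMaximallyDistant_of_forall_adj (huniversal I hI) hWJ hJW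

theorem statement10 (m : ℕ) (hm : 2 ≤ m) (R : Fin m → Type*) [∀ i, CommRing (R i)]
    [∀ i, IsArtinianRing (R i)] [∀ i, IsLocalRing (R i)] [∀ i, IsPrincipalIdealRing (R i)]
    (hnf : ∀ i, ¬ IsField (R i))
    (nn : Fin m → ℕ)
    (hfin : ∀ i, {K : Ideal (R i) | K ≠ ⊥ ∧ K ≠ ⊤}.Finite)
    (hcard : ∀ i, {K : Ideal (R i) | K ≠ ⊥ ∧ K ≠ ⊤}.ncard = nn i)
    (A0 : Set (NontrivialIdeal (∀ i, R i)))
    (hA0 : A0 = {I | ∀ i, I.1.map (Pi.evalRingHom R i) ≠ ⊥}) :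
    A0.Finite ∧ A0.ncard = (∏ i, (nn i + 1)) - 1 ∧
      (∀ I ∈ A0, ∀ J ∈ A0, I ≠ J →
        MutuallyMaximallyDistant (intersectionGraph (∀ i, R i)) I J) ∧
      (∀ I ∈ A0, ∀ J ∉ A0,
        ¬ MutuallyMaximallyDistant (intersectionGraph (∀ i, R i)) I J) :=
  statement10_general m hm R nn hfin hcard A0 hA0
end

section
/- Let m ≥ 2 be a positive integer and R = R_1 × ⋯ × R_m, where each R_i is a commutative Artinian local principal ideal ring that is not a field. Then the maximum cardinality of a set S of non-trivial ideals of R such that no two distinct members of S are mutually maximally distant in G(R) equals 2^{m-1}; that is, the independence number of the strong resolving graph satisfies β(G(R)_SR) = 2^{m-1}. -/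
/-!
Write `supp I` for the set of coordinates in which an ideal `I` of `∏ Rᵢ` is nonzero. Each `Rᵢ`
has a nonzero element lying in every nonzero ideal, so `I ∩ J ≠ 0` iff `supp I` and `supp J`
meet, and a vertex of full support bounds the diameter by `2`. Hence two distinct vertices are
mutually maximally distant exactly when their supports are disjoint or equal: equal supports make
them twins, and if `j ∈ supp I \ supp J` while the supports meet, the vertex with support `{j}`
is a neighbour of `I` at distance `2` from `J`. So, through `supp`, the sets without mutually
maximally distant pairs are the intersecting families of subsets of `Fin m`, and the largest of
these have `2 ^ (m - 1)` members.
-/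

open SimpleGraph

/-- For commutative rings this is equivalent to subdirect irreducibility. -/
def IsSubdirectlyIrreducibleRing (A : Type*) [CommRing A] : Prop :=
  ∃ s : A, s ≠ 0 ∧ ∀ I : Ideal A, I ≠ ⊥ → s ∈ I

/-- With `maximalIdeal A = (t)` and `t` nilpotent, every nonzero `x` is a unit times a power
of `t`, so `t ^ (nilpotencyClass t - 1)` lies in every nonzero ideal. -/
theorem isSubdirectlyIrreducibleRing_of_isArtinianRing (A : Type*) [CommRing A]
    [IsArtinianRing A] [IsLocalRing A] [IsPrincipalIdealRing A] :
    IsSubdirectlyIrreducibleRing A := by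
  obtain ⟨t, ht⟩ := Submodule.IsPrincipal.principal (IsLocalRing.maximalIdeal A)
  have ht_nil : IsNilpotent t := by
    have : t ∈ (⊥ : Ideal A).jacobson := by
      rw [IsLocalRing.jacobson_eq_maximalIdeal ⊥ bot_ne_top, ht]
      exact Ideal.mem_span_singleton_self t
    rwa [IsArtinianRing.jacobson_eq_radical] at this
  set n := nilpotencyClass t
  have hn : 0 < n := pos_nilpotencyClass_iff.mpr ht_nil
  refine ⟨t ^ (n - 1), pow_pred_nilpotencyClass ht_nil, fun I hI => ?_⟩
  obtain ⟨x, hxI, hx0⟩ := Submodule.exists_mem_ne_zero_of_ne_bot hI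
  have hx_dvd : ∀ k, t ^ k ∣ x → k < n := fun k hk => by
    by_contra! hnk
    exact hx0 (zero_dvd_iff.mp (pow_eq_zero_of_le hnk (pow_nilpotencyClass ht_nil) ▸ hk))
  have hfin : FiniteMultiplicity t x := ⟨n, fun h => absurd (hx_dvd _ h) (by omega)⟩
  obtain ⟨c, hxc, hc⟩ := hfin.exists_eq_pow_mul_and_not_dvd
  set k := multiplicity t x
  have hc_unit : IsUnit c := by
    rwa [← IsLocalRing.notMem_maximalIdeal, ht, Ideal.mem_span_singleton]
  have htk : t ^ k ∈ I := by
    simpa [hxc, hc_unit] using I.mul_mem_left (↑hc_unit.unit⁻¹) hxI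
  have hkn : k < n := hx_dvd k ⟨c, hxc⟩
  rw [show n - 1 = n - 1 - k + k by omega, pow_add]
  exact I.mul_mem_left _ htk

section PiSupport

variable {ι : Type*} {R : ι → Type*} [∀ i, CommRing (R i)]

def Ideal.piSupport (I : Ideal (∀ i, R i)) : Set ι := {i | ∃ x ∈ I, x i ≠ 0}

theorem Ideal.piSupport_nonempty {I : Ideal (∀ i, R i)} (hI : I ≠ ⊥) : I.piSupport.Nonempty := by
  obtain ⟨x, hxI, hx0⟩ := Submodule.exists_mem_ne_zero_of_ne_bot hI
  obtain ⟨i, hi⟩ := Function.ne_iff.mp hx0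
  exact ⟨i, x, hxI, hi⟩

theorem Ideal.piSupport_pi (J : ∀ i, Ideal (R i)) :
    (Ideal.pi J).piSupport = {i | J i ≠ ⊥} := by
  classical
  ext i
  refine ⟨fun ⟨x, hx, hxi⟩ hJ => hxi (by simpa [hJ] using hx i), fun hJ => ?_⟩
  obtain ⟨r, hr, hr0⟩ := Submodule.exists_mem_ne_zero_of_ne_bot hJ
  exact ⟨Pi.single i r, Ideal.single_mem_pi hr, by simpa using hr0⟩

theorem Ideal.single_mem_of_mem_span [DecidableEq ι] {I : Ideal (∀ i, R i)} {x : ∀ i, R i}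
    (hx : x ∈ I) {i : ι} {r : R i} (hr : r ∈ Ideal.span {x i}) : Pi.single i r ∈ I := by
  obtain ⟨a, rfl⟩ := Ideal.mem_span_singleton'.mp hr
  rw [Pi.single_mul_left]
  exact I.mul_mem_left _ hx

theorem Ideal.inf_ne_bot_iff_not_disjoint_piSupport
    (hR : ∀ i, IsSubdirectlyIrreducibleRing (R i)) {I J : Ideal (∀ i, R i)} :
    I ⊓ J ≠ ⊥ ↔ ¬Disjoint I.piSupport J.piSupport := by
  classical
  rw [Set.not_disjoint_iff]
  constructor
  · intro h
    obtain ⟨i, x, ⟨hxI, hxJ⟩, hxi⟩ := Ideal.piSupport_nonempty h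
    exact ⟨i, ⟨x, hxI, hxi⟩, ⟨x, hxJ, hxi⟩⟩
  · rintro ⟨i, ⟨x, hxI, hxi⟩, ⟨y, hyJ, hyi⟩⟩
    obtain ⟨s, hs0, hs⟩ := hR i
    have hsI : Pi.single i s ∈ I :=
      Ideal.single_mem_of_mem_span hxI (hs _ (by simpa using hxi))
    have hsJ : Pi.single i s ∈ J :=
      Ideal.single_mem_of_mem_span hyJ (hs _ (by simpa using hyi))
    exact (Submodule.ne_bot_iff _).mpr ⟨_, ⟨hsI, hsJ⟩, by simpa using hs0⟩

theorem exists_nontrivialIdeal_piSupport_eq [∀ i, Nontrivial (R i)] (hF : ∀ i, ¬IsField (R i))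
    {A : Set ι} (hA : A.Nonempty) : ∃ u : NontrivialIdeal (∀ i, R i), u.1.piSupport = A := by
  classical
  choose J hJ using fun i => Ring.not_isField_iff_exists_ideal_bot_lt_and_lt_top.mp (hF i)
  set K : ∀ i, Ideal (R i) := fun i => if i ∈ A then J i else ⊥
  have hK : (Ideal.pi K).piSupport = A := by
    ext i
    by_cases hi : i ∈ A <;> simp [Ideal.piSupport_pi, K, hi, (hJ i).1.ne']
  obtain ⟨i, hi⟩ := hA
  refine ⟨⟨Ideal.pi K, fun h => ?_, fun h => ?_⟩, hK⟩
  · obtain ⟨x, hx, hxi⟩ : i ∈ (⊥ : Ideal (∀ i, R i)).piSupport := h ▸ hK ▸ hi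
    exact hxi (by simp [(Submodule.mem_bot _).mp hx])
  · have : (1 : R i) ∈ K i := (h ▸ Submodule.mem_top : (1 : ∀ i, R i) ∈ Ideal.pi K) i
    simp only [K, if_pos hi] at this
    exact (hJ i).2.ne ((Ideal.eq_top_iff_one _).mpr this)

end PiSupport

namespace intersectionGraph

variable {ι : Type*} {R : ι → Type*} [∀ i, CommRing (R i)]
  (hR : ∀ i, IsSubdirectlyIrreducibleRing (R i))
include hR

theorem adj_iff {u v : NontrivialIdeal (∀ i, R i)} :
    (intersectionGraph (∀ i, R i)).Adj u v ↔ u ≠ v ∧ ¬Disjoint u.1.piSupport v.1.piSupport := by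
  rw [← Ideal.inf_ne_bot_iff_not_disjoint_piSupport hR]
  rfl

theorem edist_le_one_iff {u v : NontrivialIdeal (∀ i, R i)} :
    (intersectionGraph (∀ i, R i)).edist u v ≤ 1 ↔ ¬Disjoint u.1.piSupport v.1.piSupport := by
  rw [SimpleGraph.edist_le_one_iff_adj_or_eq, adj_iff hR]
  by_cases huv : u = v
  · subst huv
    simpa using (Ideal.piSupport_nonempty u.2.1).ne_empty
  · simp [huv]

theorem one_lt_edist_iff {u v : NontrivialIdeal (∀ i, R i)} :
    1 < (intersectionGraph (∀ i, R i)).edist u v ↔ Disjoint u.1.piSupport v.1.piSupport := by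
  rw [← not_le, edist_le_one_iff hR, not_not]

theorem mutuallyMaximallyDistant_of_piSupport_eq {u v : NontrivialIdeal (∀ i, R i)} (huv : u ≠ v)
    (h : u.1.piSupport = v.1.piSupport) :
    MutuallyMaximallyDistant (intersectionGraph (∀ i, R i)) u v := by
  have h1 : 1 ≤ (intersectionGraph (∀ i, R i)).edist u v :=
    Order.one_le_iff_pos.mpr (SimpleGraph.edist_pos_of_ne huv)
  refine ⟨huv, fun w hw => le_trans ?_ h1, fun w hw => le_trans ?_ h1⟩
  · rw [edist_le_one_iff hR, ← h]
    exact ((adj_iff hR).mp hw).2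
  · rw [edist_le_one_iff hR, h]
    exact ((adj_iff hR).mp hw).2

variable [∀ i, Nontrivial (R i)] (hF : ∀ i, ¬IsField (R i))
include hF

theorem edist_le_two (u v : NontrivialIdeal (∀ i, R i)) :
    (intersectionGraph (∀ i, R i)).edist u v ≤ 2 := by
  obtain ⟨i, -⟩ := Ideal.piSupport_nonempty u.2.1
  obtain ⟨w, hw⟩ := exists_nontrivialIdeal_piSupport_eq hF ⟨i, Set.mem_univ i⟩
  have hle : ∀ x, (intersectionGraph (∀ i, R i)).edist x w ≤ 1 := fun x => by
    rw [edist_le_one_iff hR, hw, Set.disjoint_univ]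
    exact (Ideal.piSupport_nonempty x.2.1).ne_empty
  calc _ ≤ _ := SimpleGraph.edist_triangle
    _ ≤ 1 + 1 := add_le_add (hle u) (SimpleGraph.edist_comm.trans_le (hle v))
    _ = 2 := one_add_one_eq_two

theorem mutuallyMaximallyDistant_of_disjoint {u v : NontrivialIdeal (∀ i, R i)}
    (h : Disjoint u.1.piSupport v.1.piSupport) :
    MutuallyMaximallyDistant (intersectionGraph (∀ i, R i)) u v := by
  have h1 := (one_lt_edist_iff hR).mpr h
  have h2 : 2 ≤ (intersectionGraph (∀ i, R i)).edist u v := Order.add_one_le_of_lt h1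
  refine ⟨fun huv => by simp [huv] at h1, fun w _ => ?_, fun w _ => ?_⟩
  · exact (edist_le_two hR hF v w).trans h2
  · exact (edist_le_two hR hF u w).trans h2

/-- A vertex `w` with support `{j}` is a neighbour of `u` that is farther from `v` than `u` is. -/
theorem not_mutuallyMaximallyDistant_of_mem_of_notMem {u v : NontrivialIdeal (∀ i, R i)} {j : ι}
    (hju : j ∈ u.1.piSupport) (hjv : j ∉ v.1.piSupport)
    (h : ¬Disjoint u.1.piSupport v.1.piSupport) :
    ¬MutuallyMaximallyDistant (intersectionGraph (∀ i, R i)) u v := by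
  rintro ⟨-, hu, -⟩
  obtain ⟨w, hw⟩ := exists_nontrivialIdeal_piSupport_eq hF (Set.singleton_nonempty j)
  have hwu : w ≠ u := by
    rintro rfl
    rw [hw, Set.disjoint_singleton_left, not_not] at h
    exact hjv h
  have hadj : (intersectionGraph (∀ i, R i)).Adj u w := by
    rw [adj_iff hR, hw, Set.disjoint_singleton_right, not_not]
    exact ⟨hwu.symm, hju⟩
  have hvw := (hu w hadj).trans ((edist_le_one_iff hR).mpr h)
  rw [edist_le_one_iff hR, hw, Set.disjoint_singleton_right, not_not] at hvw
  exact hjv hvw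

theorem not_mutuallyMaximallyDistant_of_piSupport_ne {u v : NontrivialIdeal (∀ i, R i)}
    (h : ¬Disjoint u.1.piSupport v.1.piSupport) (hne : u.1.piSupport ≠ v.1.piSupport) :
    ¬MutuallyMaximallyDistant (intersectionGraph (∀ i, R i)) u v := by
  by_cases huv : u.1.piSupport ⊆ v.1.piSupport
  · obtain ⟨j, hjv, hju⟩ := Set.not_subset.mp fun hvu => hne (huv.antisymm hvu)
    exact fun hmmd => not_mutuallyMaximallyDistant_of_mem_of_notMem hR hF hjv hju
      (fun hd => h hd.symm) hmmd.symm
  · obtain ⟨j, hju, hjv⟩ := Set.not_subset.mp huv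
    exact not_mutuallyMaximallyDistant_of_mem_of_notMem hR hF hju hjv h

variable [Fintype ι]

theorem two_mul_ncard_le_of_pairwise_not_mutuallyMaximallyDistant
    {S : Set (NontrivialIdeal (∀ i, R i))}
    (hS : S.Pairwise fun u v => ¬MutuallyMaximallyDistant (intersectionGraph (∀ i, R i)) u v) :
    2 * S.ncard ≤ 2 ^ Fintype.card ι := by
  classical
  set f := fun u : NontrivialIdeal (∀ i, R i) => u.1.piSupport
  have hinj : S.InjOn f := fun u hu v hv h => by
    by_contra huv
    exact hS hu hv huv (mutuallyMaximallyDistant_of_piSupport_eq hR huv h)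
  have hint : (f '' S).Intersecting := by
    rintro _ ⟨u, hu, rfl⟩ _ ⟨v, hv, rfl⟩
    by_cases huv : u = v
    · subst huv
      rw [disjoint_self]
      exact (Ideal.piSupport_nonempty u.2.1).ne_empty
    · exact fun hd => hS hu hv huv (mutuallyMaximallyDistant_of_disjoint hR hF hd)
  have := Set.Intersecting.card_le (s := (f '' S).toFinset) (by simpa using hint)
  rwa [Fintype.card_set, ← Set.ncard_eq_toFinset_card', hinj.ncard_image] at this

/-- A maximal intersecting family of subsets of `ι` has `2 ^ (card ι - 1)` members; realise each
of them as the support of one vertex. -/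
theorem exists_pairwise_not_mutuallyMaximallyDistant_two_mul_ncard_eq [Nonempty ι] :
    ∃ S : Set (NontrivialIdeal (∀ i, R i)), S.Finite ∧
      S.Pairwise (fun u v => ¬MutuallyMaximallyDistant (intersectionGraph (∀ i, R i)) u v) ∧
      2 * S.ncard = 2 ^ Fintype.card ι := by
  classical
  obtain ⟨t, -, ht_card, ht⟩ :=
    Set.Intersecting.exists_card_eq (s := (∅ : Finset (Set ι)))
      (by simpa using Set.intersecting_empty)
  set f := fun u : NontrivialIdeal (∀ i, R i) => u.1.piSupport
  have ht_range : (t : Set (Set ι)) ⊆ Set.range f := fun A hA =>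
    exists_nontrivialIdeal_piSupport_eq hF (Set.nonempty_iff_ne_empty.mpr (ht.ne_bot hA))
  obtain ⟨S, hS, hinj⟩ := Set.exists_image_eq_injOn_of_subset_range ht_range
  have hSt : ∀ u ∈ S, f u ∈ t := fun u hu => Finset.mem_coe.mp (hS ▸ Set.mem_image_of_mem f hu)
  refine ⟨S, Set.Finite.of_finite_image (hS ▸ t.finite_toSet) hinj, ?_, ?_⟩
  · intro u hu v hv huv
    exact not_mutuallyMaximallyDistant_of_piSupport_ne hR hF (ht (hSt u hu) (hSt v hv))
      fun h => huv (hinj hu hv h)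
  · rw [← hinj.ncard_image, hS, Set.ncard_coe_finset, ht_card, Fintype.card_set]

end intersectionGraph

theorem statement12 (m : ℕ) (hm : 2 ≤ m) (R : Fin m → Type*) [∀ i, CommRing (R i)]
    [∀ i, IsArtinianRing (R i)] [∀ i, IsLocalRing (R i)] [∀ i, IsPrincipalIdealRing (R i)]
    (hnf : ∀ i, ¬ IsField (R i)) :
    IsGreatest {k : ℕ | ∃ S : Set (NontrivialIdeal (∀ i, R i)), S.Finite ∧
        (∀ I ∈ S, ∀ J ∈ S, I ≠ J →
          ¬ MutuallyMaximallyDistant (intersectionGraph (∀ i, R i)) I J) ∧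
        S.ncard = k} (2 ^ (m - 1)) := by
  have hR := fun i => isSubdirectlyIrreducibleRing_of_isArtinianRing (R i)
  have : Nonempty (Fin m) := ⟨⟨0, by omega⟩⟩
  have hpow : 2 ^ Fintype.card (Fin m) = 2 * 2 ^ (m - 1) := by
    rw [Fintype.card_fin, ← pow_succ']
    congr 1
    omega
  constructor
  · obtain ⟨S, hfin, hS, hcard⟩ :=
      intersectionGraph.exists_pairwise_not_mutuallyMaximallyDistant_two_mul_ncard_eq hR hnf
    exact ⟨S, hfin, hS, by omega⟩
  · rintro k ⟨S, -, hS, rfl⟩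
    have :=
      intersectionGraph.two_mul_ncard_le_of_pairwise_not_mutuallyMaximallyDistant hR hnf hS
    omega
end
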